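/- arXiv:1107.2059 — 3 statements merged into one kernel-verified Lean document; each statement's English description precedes it below -/
import Mathlib

section
/- Let F_q be a finite field with q elements, c ∈ F_q a primitive element (a generator of F_q^×), and let n, r be integers with 1 ≤ r < n ≤ q−1. Let a_1, …, a_n ∈ F_q^× and assume the binomial coefficients C(r,i) are nonzero in F_q for all 0 ≤ i ≤ r. For 0 ≤ i ≤ r define the row vector G_i = C(r,i)·( a_1^r, a_2^r c^{r−i}, a_3^r c^{2(r−i)}, …, a_n^r c^{(n−1)(r−i)} ) ∈ F_q^n. Then for each 0 ≤ j ≤ r, the (j+1)×n matrix with rows G_0, …, G_j and the (j+1)×n matrix with rows G_{r−j}, …, G_r both have rank j+1, and their row spans are MDS linear codes of length n and dimension j+1, i.e., of minimum Hamming distance n−j. -/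
/-!
Up to the nonzero factors `C(r,i)`, the rows `G_0, …, G_j` are the vectors
`(y_k x_k^(j-m))_k` with `x_k = c^k` and `y_k = a_k^r c^(k(r-j))`, and the rows
`G_{r-j}, …, G_r` are the same with `y_k = a_k^r`. The `x_k` are distinct because
`n ≤ q - 1 = ord c`, so both families span a generalized Reed–Solomon code
`{(y_k p(x_k))_k : deg p ≤ j}`. A nonzero `p` of degree `≤ j < n` has at most `j` roots among
the `x_k`, which gives injectivity of the encoding and weight `≥ n - j`, and
`∏_{k<j} (X - x_k)` attains this weight.
-/

open Polynomial Finset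

/-- `d` is the minimum Hamming weight of the nonzero vectors of the linear code `C`
(for a linear code this is its minimum Hamming distance). -/
def minWeightIsLeast {F : Type*} [Field F] [DecidableEq F] {n : ℕ}
    (C : Submodule F (Fin n → F)) (d : ℕ) : Prop :=
  IsLeast { w : ℕ | ∃ x ∈ C, x ≠ 0 ∧ hammingNorm x = w } d

section WeightedEval

variable {R ι : Type*} [CommRing R]

noncomputable def weightedEval (x y : ι → R) : R[X] →ₗ[R] ι → R :=
  LinearMap.pi fun k => y k • leval (x k)

@[simp]
lemma weightedEval_apply (x y : ι → R) (p : R[X]) (k : ι) :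
    weightedEval x y p k = y k * p.eval (x k) := rfl

variable [IsDomain R] [Fintype ι] [DecidableEq R] {x y : ι → R}

lemma card_filter_eval_eq_zero_le_natDegree (hx : Function.Injective x) {p : R[X]}
    (hp : p ≠ 0) : #{k | p.eval (x k) = 0} ≤ p.natDegree := by
  by_contra! h
  exact hp <| eq_zero_of_natDegree_lt_card_of_eval_eq_zero p
    (f := fun k : {k // k ∈ ({k | p.eval (x k) = 0} : Finset ι)} => x k)
    (hx.comp Subtype.val_injective) (fun k => (mem_filter.1 k.2).2) (by rwa [Fintype.card_coe])

lemma hammingNorm_weightedEval (hy : ∀ k, y k ≠ 0) (p : R[X]) :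
    hammingNorm (weightedEval x y p) = Fintype.card ι - #{k | p.eval (x k) = 0} := by
  rw [hammingNorm, ← card_univ,
    ← card_filter_add_card_filter_not (s := univ) (fun k => p.eval (x k) = 0)]
  simp [hy]

lemma card_sub_natDegree_le_hammingNorm_weightedEval (hx : Function.Injective x)
    (hy : ∀ k, y k ≠ 0) {p : R[X]} (hp : p ≠ 0) :
    Fintype.card ι - p.natDegree ≤ hammingNorm (weightedEval x y p) := by
  rw [hammingNorm_weightedEval hy]
  have := card_filter_eval_eq_zero_le_natDegree hx hp
  omega

lemma hammingNorm_weightedEval_prod_X_sub_C (hx : Function.Injective x) (hy : ∀ k, y k ≠ 0)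
    (s : Finset ι) :
    hammingNorm (weightedEval x y (∏ i ∈ s, (X - C (x i)))) = Fintype.card ι - #s := by
  rw [hammingNorm_weightedEval hy]
  congr 2
  ext k
  simp [eval_prod, prod_eq_zero_iff, sub_eq_zero, hx.eq_iff]

lemma disjoint_degreeLT_ker_weightedEval (hx : Function.Injective x) (hy : ∀ k, y k ≠ 0)
    {d : ℕ} (hd : d ≤ Fintype.card ι) :
    Disjoint (degreeLT R d) (LinearMap.ker (weightedEval x y)) := by
  refine Submodule.disjoint_def.2 fun p hpd hp0 => ?_
  by_contra hp
  have hdeg : p.natDegree < d := (natDegree_lt_iff_degree_lt hp).2 (mem_degreeLT.1 hpd)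
  have := card_sub_natDegree_le_hammingNorm_weightedEval hx hy hp
  rw [LinearMap.mem_ker.1 hp0, hammingNorm_zero] at this
  omega

end WeightedEval

section GRS

variable {F : Type*} [Field F]

lemma linearIndependent_C_mul_X_pow_sub_and_span_eq_degreeLT {j : ℕ} {lam : Fin (j + 1) → F}
    (hlam : ∀ m, lam m ≠ 0) :
    LinearIndependent F (fun m : Fin (j + 1) => C (lam m) * X ^ (j - (m : ℕ))) ∧
      Submodule.span F (Set.range fun m : Fin (j + 1) => C (lam m) * X ^ (j - (m : ℕ))) =
        degreeLT F (j + 1) := by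
  set b := ((degreeLT.basis F (j + 1)).reindex Fin.revPerm).unitsSMul
    fun m => Units.mk0 (lam m) (hlam m)
  have hb : (fun m : Fin (j + 1) => C (lam m) * X ^ (j - (m : ℕ))) =
      (degreeLT F (j + 1)).subtype ∘ b := by
    funext m
    simp [b, Module.Basis.unitsSMul_apply, Fin.revPerm_symm, smul_eq_C_mul]
  rw [hb, Set.range_comp, ← Submodule.map_span, b.span_eq, Submodule.map_top,
    Submodule.range_subtype]
  exact ⟨b.linearIndependent.map' _ (Submodule.ker_subtype _), rfl⟩

variable [DecidableEq F] {n j : ℕ} {x y : Fin n → F}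

theorem minWeightIsLeast_map_weightedEval_degreeLT (hj : j < n) (hx : Function.Injective x)
    (hy : ∀ k, y k ≠ 0) :
    minWeightIsLeast ((degreeLT F (j + 1)).map (weightedEval x y)) (n - j) := by
  constructor
  · set s : Finset (Fin n) := Iio ⟨j, hj⟩
    have hs : #s = j := Fin.card_Iio _
    have hweight := hammingNorm_weightedEval_prod_X_sub_C hx hy s
    rw [Fintype.card_fin, hs] at hweight
    refine ⟨_, Submodule.mem_map_of_mem (mem_degreeLT.2 ?_), ?_, hweight⟩
    · refine degree_le_natDegree.trans_lt ?_
      rw [natDegree_finsetProd_X_sub_C_eq_card, hs]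
      exact_mod_cast j.lt_succ_self
    · intro h
      rw [h, hammingNorm_zero] at hweight
      omega
  · rintro _ ⟨_, ⟨p, hpd, rfl⟩, hv, rfl⟩
    have hp : p ≠ 0 := by rintro rfl; exact hv (map_zero _)
    have hdeg : p.natDegree ≤ j :=
      Nat.lt_succ_iff.1 ((natDegree_lt_iff_degree_lt hp).2 (mem_degreeLT.1 hpd))
    have := card_sub_natDegree_le_hammingNorm_weightedEval hx hy hp
    rw [Fintype.card_fin] at this
    omega

theorem linearIndependent_and_minWeightIsLeast_of_grs (hj : j < n) (hx : Function.Injective x)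
    (hy : ∀ k, y k ≠ 0) {lam : Fin (j + 1) → F} (hlam : ∀ m, lam m ≠ 0)
    {W : Fin (j + 1) → Fin n → F} (hW : ∀ m k, W m k = lam m * (y k * x k ^ (j - (m : ℕ)))) :
    LinearIndependent F W ∧ minWeightIsLeast (Submodule.span F (Set.range W)) (n - j) := by
  obtain ⟨hli, hspan⟩ := linearIndependent_C_mul_X_pow_sub_and_span_eq_degreeLT hlam
  have hW' : W = weightedEval x y ∘ fun m => C (lam m) * X ^ (j - (m : ℕ)) := by
    funext m k
    simp only [hW, Function.comp_apply, weightedEval_apply, eval_mul, eval_C, eval_pow, eval_X]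
    ring
  rw [hW', Set.range_comp, ← Submodule.map_span, hspan]
  refine ⟨hli.map ?_, minWeightIsLeast_map_weightedEval_degreeLT hj hx hy⟩
  rw [hspan]
  exact disjoint_degreeLT_ker_weightedEval hx hy (by simpa using hj)

end GRS

lemma injective_pow_of_le_orderOf {G : Type*} [Monoid G] {g : G} {n : ℕ} (hn : n ≤ orderOf g) :
    Function.Injective fun k : Fin n => g ^ (k : ℕ) := fun k l h =>
  Fin.ext <| pow_injOn_Iio_orderOf (Set.mem_Iio.2 (k.2.trans_le hn))
    (Set.mem_Iio.2 (l.2.trans_le hn)) h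

theorem rows_span_MDS_codes_general
    {F : Type*} [Field F] [Fintype F] [DecidableEq F]
    -- c is a primitive element of F_q
    (c : Fˣ) (hc : ∀ x : Fˣ, x ∈ Subgroup.zpowers c)
    (n r : ℕ) (hrn : r < n) (hnq : n ≤ Fintype.card F - 1)
    (a : Fin n → F) (ha : ∀ i, a i ≠ 0)
    (hbin : ∀ i ≤ r, (r.choose i : F) ≠ 0)
    -- G_i = C(r,i)·( a_1^r , a_2^r c^{r−i} , … , a_n^r c^{(n−1)(r−i)} )
    (G : ℕ → Fin n → F)
    (hG : ∀ i, i ≤ r → ∀ k : Fin n,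
      G i k = (r.choose i : F) * (a k ^ r * (c : F) ^ ((k : ℕ) * (r - i)))) :
    ∀ j ≤ r,
      -- the matrix with rows G_0, …, G_j has rank j+1 and its row span is MDS
      (LinearIndependent F (fun m : Fin (j + 1) => G (m : ℕ)) ∧
        minWeightIsLeast
          (Submodule.span F (Set.range fun m : Fin (j + 1) => G (m : ℕ))) (n - j)) ∧
      -- the matrix with rows G_{r−j}, …, G_r has rank j+1 and its row span is MDS
      (LinearIndependent F (fun m : Fin (j + 1) => G (r - j + (m : ℕ))) ∧
        minWeightIsLeast
          (Submodule.span F (Set.range fun m : Fin (j + 1) => G (r - j + (m : ℕ)))) (n - j)) := by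
  intro j hjr
  have hjn : j < n := hjr.trans_lt hrn
  have horder : orderOf c = Fintype.card F - 1 := by
    rw [orderOf_eq_card_of_forall_mem_zpowers hc, Nat.card_eq_fintype_card, Fintype.card_units]
  have hx : Function.Injective fun k : Fin n => (c : F) ^ (k : ℕ) := by
    intro k l h
    exact injective_pow_of_le_orderOf (horder ▸ hnq) (Units.ext (by simpa using h))
  constructor
  · refine linearIndependent_and_minWeightIsLeast_of_grs hjn hx
      (y := fun k => a k ^ r * (c : F) ^ ((k : ℕ) * (r - j)))
      (fun k => mul_ne_zero (pow_ne_zero _ (ha k)) (pow_ne_zero _ c.ne_zero))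
      (lam := fun m => (r.choose m : F)) (fun m => hbin m (by omega)) fun m k => ?_
    have hexp : (k : ℕ) * (r - m) = (k : ℕ) * (r - j) + (k : ℕ) * (j - m) := by
      rw [← Nat.mul_add]; congr 1; omega
    rw [hG m (by omega), hexp, pow_add, ← pow_mul]
    ring
  · refine linearIndependent_and_minWeightIsLeast_of_grs hjn hx (y := fun k => a k ^ r)
      (fun k => pow_ne_zero _ (ha k)) (lam := fun m => (r.choose (r - j + m) : F))
      (fun m => hbin _ (by omega)) fun m k => ?_
    rw [hG _ (by omega), show r - (r - j + m) = j - m by omega, pow_mul]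

theorem rows_span_MDS_codes
    {F : Type*} [Field F] [Fintype F] [DecidableEq F]
    -- c is a primitive element of F_q
    (c : Fˣ) (hc : ∀ x : Fˣ, x ∈ Subgroup.zpowers c)
    (n r : ℕ) (hr : 1 ≤ r) (hrn : r < n) (hnq : n ≤ Fintype.card F - 1)
    (a : Fin n → F) (ha : ∀ i, a i ≠ 0)
    (hbin : ∀ i ≤ r, (r.choose i : F) ≠ 0)
    -- G_i = C(r,i)·( a_1^r , a_2^r c^{r−i} , … , a_n^r c^{(n−1)(r−i)} )
    (G : ℕ → Fin n → F)
    (hG : ∀ i, i ≤ r → ∀ k : Fin n,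
      G i k = (r.choose i : F) * (a k ^ r * (c : F) ^ ((k : ℕ) * (r - i)))) :
    ∀ j ≤ r,
      -- the matrix with rows G_0, …, G_j has rank j+1 and its row span is MDS
      (LinearIndependent F (fun m : Fin (j + 1) => G (m : ℕ)) ∧
        minWeightIsLeast
          (Submodule.span F (Set.range fun m : Fin (j + 1) => G (m : ℕ))) (n - j)) ∧
      -- the matrix with rows G_{r−j}, …, G_r has rank j+1 and its row span is MDS
      (LinearIndependent F (fun m : Fin (j + 1) => G (r - j + (m : ℕ))) ∧
        minWeightIsLeast
          (Submodule.span F (Set.range fun m : Fin (j + 1) => G (r - j + (m : ℕ)))) (n - j)) :=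
  rows_span_MDS_codes_general c hc n r hrn hnq a ha hbin G hG
end

section
/- Let F_q be a finite field, a ∈ F_q^× an element of multiplicative order at least n, b ∈ F_q, and let n, r be integers with 0 ≤ r < n. For 0 ≤ j ≤ r set c_j = Σ_{m=j}^{r} C(m,j) b^{m−j} ∈ F_q, and assume c_j ≠ 0 for all 0 ≤ j ≤ r. Set G(z) = ( Σ_{i=0}^{r} (z+b)^i, Σ_{i=0}^{r} (az+b)^i, Σ_{i=0}^{r} (a^2 z+b)^i, …, Σ_{i=0}^{r} (a^{n−1} z+b)^i ) ∈ F_q[z]^n. Then G(z) is a canonical (basic and minimal) generator matrix of the one-dimensional convolutional code C = F_q(z)·G(z) ⊆ F_q(z)^n, C has degree r, and the free distance of C equals n(r+1); hence C is an MDS convolutional code with parameters (n, 1, r). -/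
open Polynomial Finset

/-- The vector of rational functions obtained from a vector of polynomials. -/
noncomputable def liftVec {F : Type*} [Field F] {n : ℕ} (x : Fin n → Polynomial F) :
    Fin n → RatFunc F :=
  fun i => algebraMap (Polynomial F) (RatFunc F) (x i)

/-- The weight of a polynomial vector `x(z) = Σ_t x_t z^t` is `Σ_t w_H(x_t)`. -/
noncomputable def polyWeight {F : Type*} [Field F] [DecidableEq F] {n : ℕ}
    (x : Fin n → Polynomial F) : ℕ :=
  ∑ t ∈ Finset.range ((Finset.univ.sup fun i => (x i).natDegree) + 1),
    hammingNorm (fun i => (x i).coeff t)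

/-!
Write `P(z) = Σ_{i ≤ r} (z + b)^i`; its coefficients are the `c_j`, and the `k`-th entry of `G` is
`P(a^k z)`. A common root `z` of the entries would make the `n > r` distinct values `a^k z` roots
of `P`, so the entries generate the unit ideal of `F[z]`. Hence `F[z]^n / F[z] G` is torsion-free,
so free, and every polynomial codeword is `v(z) G(z)` with `v` a polynomial.

The coefficient of `z^t` in `v(z) P(a^k z)` is `Q_t(a^k)`, where `Q_t` is supported on
`{t - s : s ∈ supp v, t - r ≤ s ≤ t}` because every `c_j` is nonzero. So at most `s' - s` of the
`n` entries vanish, where `s ≤ s'` are the extreme points of `supp v` in the window `[t - r, t]`.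
These losses add up to at most `r` times the number of points lying in gaps of length `≤ r` of
`supp v`; shifting those points by `r` gives distinct times, beyond the first `r + 1`, whose windows
meet `supp v`. As `r < n`, the weight is at least `n (r + 1)`.
-/

namespace Polynomial

section CommSemiring

variable {R : Type*} [CommSemiring R]

theorem coeff_comp_C_mul_X (p : R[X]) (a : R) (n : ℕ) :
    (p.comp (C a * X)).coeff n = a ^ n * p.coeff n := by
  induction p using Polynomial.induction_on' with
  | add p q hp hq => rw [add_comp, coeff_add, coeff_add, hp, hq, mul_add]
  | monomial k c =>
    rw [monomial_comp, mul_pow, ← C_pow, ← mul_assoc, ← C_mul, coeff_C_mul_X_pow, coeff_monomial]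
    split_ifs <;> simp_all [mul_comm]

theorem coeff_sum_X_add_C_pow (b : R) (r j : ℕ) :
    (∑ i ∈ range (r + 1), (X + C b) ^ i).coeff j =
      ∑ m ∈ Icc j r, (m.choose j : R) * b ^ (m - j) := by
  simp only [finsetSum_coeff, coeff_X_add_C_pow, mul_comm (b ^ _)]
  refine (sum_subset (fun m hm => ?_) fun m hm hm' => ?_).symm
  · rw [mem_Icc] at hm
    exact mem_range.2 (by omega)
  · rw [mem_range] at hm
    rw [mem_Icc] at hm'
    rw [Nat.choose_eq_zero_of_lt (by omega), Nat.cast_zero, zero_mul]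

theorem natDegree_sum_X_add_C_pow [Nontrivial R] (b : R) (r : ℕ) :
    (∑ i ∈ range (r + 1), (X + C b) ^ i).natDegree = r := by
  refine natDegree_eq_of_le_of_coeff_ne_zero (natDegree_le_iff_coeff_eq_zero.2 fun j hj => ?_) ?_
  · rw [coeff_sum_X_add_C_pow, Icc_eq_empty (by omega), sum_empty]
  · rw [coeff_sum_X_add_C_pow, Icc_self, sum_singleton, Nat.choose_self, Nat.sub_self]
    simp

/-- The coefficient of `z^t` in `v(z) P(y z)`, as a polynomial in `y`. -/
noncomputable def mulCompCoeff (v P : R[X]) (t : ℕ) : R[X] :=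
  ∑ j ∈ range (t + 1), C (v.coeff (t - j) * P.coeff j) * X ^ j

theorem coeff_mulCompCoeff (v P : R[X]) (t j : ℕ) :
    (mulCompCoeff v P t).coeff j = if j ≤ t then v.coeff (t - j) * P.coeff j else 0 := by
  simp only [mulCompCoeff, finsetSum_coeff, coeff_C_mul_X_pow, sum_ite_eq, mem_range,
    Nat.lt_succ_iff]

theorem coeff_mul_comp_C_mul_X (v P : R[X]) (a : R) (t : ℕ) :
    (v * P.comp (C a * X)).coeff t = (mulCompCoeff v P t).eval a := by
  rw [coeff_mul, Nat.sum_antidiagonal_eq_sum_range_succ_mk, ← sum_range_reflect, mulCompCoeff,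
    eval_finsetSum]
  refine sum_congr rfl fun j hj => ?_
  rw [mem_range] at hj
  rw [coeff_comp_C_mul_X, eval_C_mul, eval_X_pow, Nat.succ_sub_one, Nat.sub_sub_self (by omega)]
  ring

end CommSemiring

section IsDomain

variable {R : Type*} [CommRing R] [IsDomain R]

theorem card_le_natDegree_sub_natTrailingDegree {p : R[X]} (hp : p ≠ 0) {s : Finset R}
    (hs : ∀ x ∈ s, x ≠ 0 ∧ p.IsRoot x) : #s ≤ p.natDegree - p.natTrailingDegree := by
  obtain ⟨q, hpq⟩ : X ^ p.natTrailingDegree ∣ p :=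
    X_pow_dvd_iff.2 fun _ => coeff_eq_zero_of_lt_natTrailingDegree
  have hq : q ≠ 0 := by rintro rfl; exact hp (by rw [hpq, mul_zero])
  have hdeg : p.natDegree = p.natTrailingDegree + q.natDegree := by
    conv_lhs => rw [hpq]
    rw [natDegree_mul (pow_ne_zero _ X_ne_zero) hq, natDegree_X_pow]
  refine (card_le_degree_of_subset_roots (p := q) fun x hx => ?_).trans_eq (by omega)
  obtain ⟨hx0, hroot⟩ := hs x hx
  rw [mem_roots hq, IsRoot]
  rw [IsRoot, hpq, eval_mul, eval_pow, eval_X] at hroot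
  exact (mul_eq_zero.1 hroot).resolve_left (pow_ne_zero _ hx0)

theorem exists_le_hammingNorm_eval_mulCompCoeff [DecidableEq R] {ι : Type*} [Fintype ι] {r : ℕ}
    {P : R[X]} (hPdeg : P.natDegree ≤ r) (hP : ∀ j ≤ r, P.coeff j ≠ 0) {α : ι → R}
    (hα : Function.Injective α) (hα0 : ∀ i, α i ≠ 0) {v : R[X]} {s₀ t : ℕ}
    (hs₀ : s₀ ∈ v.support) (hs₀t : s₀ ≤ t) (hts₀ : t ≤ s₀ + r) :
    ∃ s ∈ v.support, ∃ s' ∈ v.support, t ≤ s + r ∧ s ≤ s' ∧ s' ≤ t ∧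
      Fintype.card ι ≤ hammingNorm (fun i => (mulCompCoeff v P t).eval (α i)) + (s' - s) := by
  set Q := mulCompCoeff v P t
  have hsupp : ∀ j ∈ Q.support, j ≤ t ∧ j ≤ r ∧ t - j ∈ v.support := by
    intro j hj
    rw [mem_support_iff, coeff_mulCompCoeff] at hj
    split_ifs at hj with hjt
    · exact ⟨hjt, (le_natDegree_of_ne_zero (right_ne_zero_of_mul hj)).trans hPdeg,
        mem_support_iff.2 (left_ne_zero_of_mul hj)⟩
    · exact absurd rfl hj
  have hQ : Q ≠ 0 := by
    have : Q.coeff (t - s₀) ≠ 0 := by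
      rw [coeff_mulCompCoeff, if_pos (by omega), Nat.sub_sub_self hs₀t]
      exact mul_ne_zero (mem_support_iff.1 hs₀) (hP _ (by omega))
    exact fun h => this (by rw [h, coeff_zero])
  obtain ⟨hdt, hdr, hds⟩ := hsupp _ (natDegree_mem_support_of_nonzero hQ)
  obtain ⟨-, -, hts⟩ := hsupp _ (natTrailingDegree_mem_support_of_nonzero hQ)
  have hle := natTrailingDegree_le_natDegree Q
  refine ⟨_, hds, _, hts, by omega, by omega, by omega, ?_⟩
  have hzeros : #{i | Q.eval (α i) = 0} ≤ Q.natDegree - Q.natTrailingDegree := by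
    rw [← card_image_of_injective _ hα]
    refine card_le_natDegree_sub_natTrailingDegree hQ fun x hx => ?_
    obtain ⟨i, hi, rfl⟩ := mem_image.1 hx
    exact ⟨hα0 i, (mem_filter.1 hi).2⟩
  have hsplit := card_filter_add_card_filter_not (s := univ) fun i => Q.eval (α i) ≠ 0
  simp only [not_not, card_univ] at hsplit
  rw [hammingNorm]
  omega

end IsDomain

universe u

theorem span_range_eq_top_of_forall_exists_aeval_ne_zero {K : Type u} [Field K] {ι : Type*}
    (f : ι → K[X]) (h : ∀ (L : Type u) [Field L] [Algebra K L] (z : L), ∃ i, aeval z (f i) ≠ 0) :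
    Ideal.span (Set.range f) = ⊤ := by
  by_contra hne
  obtain ⟨M, hM, hle⟩ := Ideal.exists_le_maximal _ hne
  let _ := Ideal.Quotient.field M
  obtain ⟨i, hi⟩ := h (K[X] ⧸ M) (Ideal.Quotient.mkₐ K M X)
  rw [aeval_algHom_apply, aeval_X_left_apply, Ideal.Quotient.mkₐ_eq_mk, Ne,
    Ideal.Quotient.eq_zero_iff_mem] at hi
  exact hi (hle (Ideal.subset_span ⟨i, rfl⟩))

theorem span_range_comp_C_mul_X_eq_top {K : Type u} [Field K] {ι : Type*} [Fintype ι]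
    {P : K[X]} (hP0 : P.coeff 0 ≠ 0) (hdeg : P.natDegree < Fintype.card ι) {α : ι → K}
    (hα : Function.Injective α) :
    Ideal.span (Set.range fun i => P.comp (C (α i) * X)) = ⊤ := by
  classical
  refine span_range_eq_top_of_forall_exists_aeval_ne_zero _ fun L _ _ z => ?_
  by_contra! hroot
  simp only [aeval_comp, map_mul, aeval_C, aeval_X] at hroot
  have : Nonempty ι := Fintype.card_pos_iff.1 (by omega)
  have hz : z ≠ 0 := by
    rintro rfl
    have := hroot (Classical.arbitrary ι)
    rw [mul_zero, ← coeff_zero_eq_aeval_zero', map_eq_zero] at this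
    exact hP0 this
  have hinj : Function.Injective fun i => algebraMap K L (α i) * z := fun i j hij =>
    hα ((algebraMap K L).injective (mul_right_cancel₀ hz hij))
  have hP : P.map (algebraMap K L) ≠ 0 := Polynomial.map_ne_zero fun h => hP0 (by simp [h])
  have hcard := card_le_degree_of_subset_roots (p := P.map (algebraMap K L))
    (Z := univ.image fun i => algebraMap K L (α i) * z) fun x hx => by
      obtain ⟨i, -, rfl⟩ := mem_image.1 hx
      rw [mem_roots hP, IsRoot, eval_map_algebraMap]
      exact hroot i
  rw [card_image_of_injective _ hinj, card_univ, natDegree_map] at hcard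
  omega

end Polynomial

/-- `t ∈ reach S r` iff the window `[t - r, t]` meets `S`. -/
def reach (S : Finset ℕ) (r : ℕ) : Finset ℕ := S.biUnion fun s => Icc s (s + r)

def shortGapPoints (S : Finset ℕ) (r : ℕ) : Finset ℕ :=
  S.biUnion fun s => {s' ∈ S | s' ≤ s + r}.biUnion fun s' => Ioc s s'

theorem card_shortGapPoints_add_le {S : Finset ℕ} (hS : S.Nonempty) (r : ℕ) :
    #(shortGapPoints S r) + (r + 1) ≤ #(reach S r) := by
  have hdisj : Disjoint ((shortGapPoints S r).map (addRightEmbedding r))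
      (Icc (S.min' hS) (S.min' hS + r)) := by
    refine disjoint_left.2 fun t ht ht' => ?_
    simp only [shortGapPoints, mem_map, mem_biUnion, mem_filter, mem_Ioc,
      addRightEmbedding_apply] at ht
    obtain ⟨u, ⟨s, hs, -, -, hsu, -⟩, rfl⟩ := ht
    have := S.min'_le s hs
    simp only [mem_Icc] at ht'
    omega
  have hsub : (shortGapPoints S r).map (addRightEmbedding r) ∪ Icc (S.min' hS) (S.min' hS + r)
      ⊆ reach S r := by
    intro t ht
    simp only [reach, mem_biUnion, mem_Icc]
    rcases mem_union.1 ht with ht | ht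
    · simp only [shortGapPoints, mem_map, mem_biUnion, mem_filter, mem_Ioc,
        addRightEmbedding_apply] at ht
      obtain ⟨u, ⟨s, hs, s', ⟨hs', hs'r⟩, hsu, hus'⟩, rfl⟩ := ht
      exact ⟨s', hs', by omega, by omega⟩
    · exact ⟨_, S.min'_mem hS, mem_Icc.1 ht⟩
  have := card_le_card hsub
  rw [card_union_of_disjoint hdisj, card_map, Nat.card_Icc] at this
  omega

theorem sum_card_filter_le_card_mul (D T : Finset ℕ) (r : ℕ) :
    ∑ t ∈ T, #{u ∈ D | u ≤ t ∧ t < u + r} ≤ #D * r := by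
  have := sum_card_bipartiteAbove_eq_sum_card_bipartiteBelow (s := T) (t := D)
    (r := fun t u => u ≤ t ∧ t < u + r)
  simp only [bipartiteAbove, bipartiteBelow] at this
  rw [this, ← smul_eq_mul]
  refine sum_le_card_nsmul _ _ _ fun u _ => ?_
  calc #{t ∈ T | u ≤ t ∧ t < u + r} ≤ #(Ico u (u + r)) :=
        card_le_card fun t ht => by simp only [mem_filter, mem_Ico] at ht ⊢; exact ht.2
    _ = r := by simp

theorem mul_succ_le_sum_reach {S : Finset ℕ} (hS : S.Nonempty) {n r : ℕ} (hrn : r ≤ n)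
    (w : ℕ → ℕ) (hw : ∀ t ∈ reach S r, ∃ s ∈ S, ∃ s' ∈ S,
      t ≤ s + r ∧ s ≤ s' ∧ s' ≤ t ∧ n ≤ w t + (s' - s)) :
    n * (r + 1) ≤ ∑ t ∈ reach S r, w t := by
  set D := shortGapPoints S r
  have hloss : ∀ t ∈ reach S r, n ≤ w t + #{u ∈ D | u ≤ t ∧ t < u + r} := by
    intro t ht
    obtain ⟨s, hs, s', hs', hts, hss', hs't, hn⟩ := hw t ht
    have : Ioc s s' ⊆ {u ∈ D | u ≤ t ∧ t < u + r} := fun u hu => by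
      simp only [mem_Ioc] at hu
      simp only [D, shortGapPoints, mem_filter, mem_biUnion, mem_Ioc]
      exact ⟨⟨s, hs, s', ⟨hs', by omega⟩, hu⟩, by omega, by omega⟩
    have := card_le_card this
    rw [Nat.card_Ioc] at this
    omega
  have hsum := sum_le_sum hloss
  rw [sum_const, smul_eq_mul, sum_add_distrib] at hsum
  have hcount := sum_card_filter_le_card_mul D (reach S r) r
  have hcard := Nat.mul_le_mul_left n (card_shortGapPoints_add_le hS r)
  have hrD := Nat.mul_le_mul_right #D hrn
  linarith

section Unimodular

variable {R : Type*} [CommRing R] {ι : Type*} [Fintype ι] {g : ι → R}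

theorem exists_eq_smul_of_algebraMap_mem_span {K : Type*} [CommRing K] [Algebra R K]
    [FaithfulSMul R K] (hg : Ideal.span (Set.range g) = ⊤) {x : ι → R}
    (hx : (fun i => algebraMap R K (x i)) ∈ Submodule.span K {fun i => algebraMap R K (g i)}) :
    ∃ v : R, x = v • g := by
  obtain ⟨u, hu⟩ := Ideal.mem_span_range_iff_exists_fun.1 (hg ▸ Submodule.mem_top (x := (1 : R)))
  obtain ⟨f, hf⟩ := Submodule.mem_span_singleton.1 hx
  have hfi : ∀ i, f * algebraMap R K (g i) = algebraMap R K (x i) := fun i => congrFun hf i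
  have hf' : f = algebraMap R K (∑ i, u i * x i) := by
    calc f = f * algebraMap R K (∑ i, u i * g i) := by rw [hu, map_one, mul_one]
      _ = _ := by
        simp only [map_sum, map_mul, mul_sum, ← hfi]
        exact sum_congr rfl fun i _ => by ring
  refine ⟨∑ i, u i * x i, funext fun i => FaithfulSMul.algebraMap_injective R K ?_⟩
  rw [Pi.smul_apply, smul_eq_mul, map_mul, ← hf', hfi]

theorem mem_span_singleton_of_smul_mem [IsDomain R] (hg : Ideal.span (Set.range g) = ⊤) {c : R}
    (hc : c ≠ 0) {x : ι → R} (hx : c • x ∈ Submodule.span R {g}) : x ∈ Submodule.span R {g} := by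
  obtain ⟨u, hu⟩ := Ideal.mem_span_range_iff_exists_fun.1 (hg ▸ Submodule.mem_top (x := (1 : R)))
  obtain ⟨q, hq⟩ := Submodule.mem_span_singleton.1 hx
  have hqi : ∀ i, q * g i = c * x i := fun i => congrFun hq i
  have hq' : q = c * ∑ i, u i * x i := by
    calc q = q * ∑ i, u i * g i := by rw [hu, mul_one]
      _ = _ := by
        simp only [mul_sum]
        exact sum_congr rfl fun i _ => by linear_combination u i * hqi i
  refine Submodule.mem_span_singleton.2 ⟨∑ i, u i * x i, funext fun i => mul_left_cancel₀ hc ?_⟩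
  rw [Pi.smul_apply, smul_eq_mul, ← mul_assoc, ← hq', hqi]

theorem free_quotient_span_singleton [IsDomain R] [IsPrincipalIdealRing R]
    (hg : Ideal.span (Set.range g) = ⊤) : Module.Free R ((ι → R) ⧸ Submodule.span R {g}) := by
  have : Module.IsTorsionFree R ((ι → R) ⧸ Submodule.span R {g}) :=
    .of_smul_eq_zero fun c y hcy => by
      obtain ⟨x, rfl⟩ := Submodule.Quotient.mk_surjective _ y
      refine or_iff_not_imp_left.2 fun hc => ?_
      rw [← Submodule.Quotient.mk_smul, Submodule.Quotient.mk_eq_zero] at hcy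
      rw [Submodule.Quotient.mk_eq_zero]
      exact mem_span_singleton_of_smul_mem hg hc hcy
  exact Module.free_of_finite_type_torsion_free'

end Unimodular

section ConvolutionalCode

variable {K : Type*} [Field K] {n : ℕ}

theorem sup_natDegree_le_sup_natDegree_smul (g : Fin n → K[X]) {v : K[X]} (hv : v ≠ 0) :
    (univ.sup fun i => (g i).natDegree) ≤ univ.sup fun i => ((v • g) i).natDegree := by
  refine sup_mono_fun fun i _ => ?_
  rcases eq_or_ne (g i) 0 with hgi | hgi
  · simp [hgi]
  · exact natDegree_le_of_dvd (dvd_mul_left _ _) (mul_ne_zero hv hgi)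

variable [DecidableEq K]

theorem polyWeight_le (x : Fin n → K[X]) :
    polyWeight x ≤ n * ((univ.sup fun i => (x i).natDegree) + 1) := by
  rw [polyWeight]
  refine (sum_le_card_nsmul _ _ n fun t _ => ?_).trans_eq
    (by rw [card_range, smul_eq_mul, mul_comm])
  exact (hammingNorm_le_card_fintype (x := fun i => (x i).coeff t)).trans_eq (Fintype.card_fin n)

theorem mul_succ_le_polyWeight_smul_comp {r : ℕ} (hrn : r < n) {P : K[X]}
    (hPdeg : P.natDegree ≤ r) (hP : ∀ j ≤ r, P.coeff j ≠ 0) {α : Fin n → K}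
    (hα : Function.Injective α) (hα0 : ∀ i, α i ≠ 0) {v : K[X]} (hv : v ≠ 0) :
    n * (r + 1) ≤ polyWeight (v • fun i => P.comp (C (α i) * X)) := by
  set x := v • fun i => P.comp (C (α i) * X)
  have hw : ∀ t ∈ reach v.support r, ∃ s ∈ v.support, ∃ s' ∈ v.support, t ≤ s + r ∧ s ≤ s' ∧
      s' ≤ t ∧ n ≤ hammingNorm (fun i => (x i).coeff t) + (s' - s) := by
    intro t ht
    obtain ⟨s₀, hs₀, hts₀⟩ := mem_biUnion.1 ht
    rw [mem_Icc] at hts₀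
    simpa only [x, Pi.smul_apply, smul_eq_mul, coeff_mul_comp_C_mul_X, Fintype.card_fin] using
      exists_le_hammingNorm_eval_mulCompCoeff hPdeg hP hα hα0 hs₀ hts₀.1 hts₀.2
  rw [polyWeight]
  refine (mul_succ_le_sum_reach (support_nonempty.2 hv) hrn.le _ hw).trans
    (sum_le_sum_of_subset fun t ht => ?_)
  obtain ⟨s, -, s', -, hts, hss', hs't, hn⟩ := hw t ht
  obtain ⟨i, hi⟩ := Function.ne_iff.1
    ((hammingNorm_pos_iff (x := fun i => (x i).coeff t)).1 (by omega))
  exact mem_range.2 (Nat.lt_succ_of_le ((le_natDegree_of_ne_zero hi).trans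
    (le_sup (f := fun i => (x i).natDegree) (mem_univ i))))

end ConvolutionalCode

theorem CGC_s_eq_zero_MDS_general
    {F : Type*} [Field F] [DecidableEq F]
    (n r : ℕ) (hrn : r < n)
    -- a ∈ F_q^× has multiplicative order at least n
    (a : F) (ha : a ≠ 0) (horder : n ≤ orderOf a)
    (b : F)
    -- c_j = Σ_{m=j}^{r} C(m,j) b^{m−j} ≠ 0 for all 0 ≤ j ≤ r
    (hc : ∀ j ≤ r, (∑ m ∈ Finset.Icc j r, (m.choose j : F) * b ^ (m - j)) ≠ 0)
    -- G(z) = ( Σ_{i=0}^{r} (z+b)^i , Σ_{i=0}^{r} (az+b)^i , … , Σ_{i=0}^{r} (a^{n−1}z+b)^i )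
    (Gpoly : Fin n → Polynomial F)
    (hG : ∀ k : Fin n, Gpoly k =
      ∑ i ∈ Finset.range (r + 1),
        (Polynomial.C (a ^ (k : ℕ)) * Polynomial.X + Polynomial.C b) ^ i) :
    -- G(z) is a generator matrix (rank 1) of C = F_q(z)·G(z) …
    Gpoly ≠ 0 ∧
    -- … which is basic: F_q[z]^n / (F_q[z]-row span of G) is free
    Module.Free (Polynomial F)
      ((Fin n → Polynomial F) ⧸ Submodule.span (Polynomial F) {Gpoly}) ∧
    -- … and canonical: its row degree is minimal among all polynomial generator matrices of C
    (∀ x : Fin n → Polynomial F, x ≠ 0 →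
        Submodule.span (RatFunc F) {liftVec x} = Submodule.span (RatFunc F) {liftVec Gpoly} →
        (Finset.univ.sup fun i => (Gpoly i).natDegree) ≤
          Finset.univ.sup fun i => (x i).natDegree) ∧
    -- C has degree r (the max degree of the 1×1 minors of the basic matrix G)
    (Finset.univ.sup fun i => (Gpoly i).natDegree) = r ∧
    -- the free distance of C equals n(r+1), the generalized Singleton bound for (n,1,r):
    -- hence C is an MDS convolutional code
    IsLeast { w : ℕ | ∃ x : Fin n → Polynomial F,
        liftVec x ∈ Submodule.span (RatFunc F) {liftVec Gpoly} ∧ x ≠ 0 ∧ polyWeight x = w }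
      (n * (r + 1)) := by
  have : NeZero n := ⟨by omega⟩
  set P : F[X] := ∑ i ∈ range (r + 1), (X + C b) ^ i
  obtain rfl : Gpoly = fun k : Fin n => P.comp (C (a ^ (k : ℕ)) * X) :=
    funext fun k => by simp [hG k, P, Polynomial.sum_comp, add_comp, pow_comp]
  have hP : ∀ j ≤ r, P.coeff j ≠ 0 := fun j hj => by rw [coeff_sum_X_add_C_pow]; exact hc j hj
  have hPdeg : P.natDegree = r := natDegree_sum_X_add_C_pow b r
  have hα : Function.Injective fun k : Fin n => a ^ (k : ℕ) := fun k l hkl =>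
    Fin.ext (pow_injOn_Iio_orderOf (k.2.trans_le horder) (l.2.trans_le horder) hkl)
  have hα0 : ∀ k : Fin n, a ^ (k : ℕ) ≠ 0 := fun k => pow_ne_zero _ ha
  have hspan := span_range_comp_C_mul_X_eq_top (hP 0 r.zero_le) (by simpa [hPdeg]) hα
  have hG0 : (fun k : Fin n => P.comp (C (a ^ (k : ℕ)) * X)) ≠ 0 := Function.ne_iff.2
    ⟨0, fun h => hP 0 r.zero_le (by simpa [coeff_comp_C_mul_X] using congr_arg (coeff · 0) h)⟩
  have hsup : (univ.sup fun k : Fin n => (P.comp (C (a ^ (k : ℕ)) * X)).natDegree) = r := by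
    simp only [natDegree_comp, natDegree_C_mul_X _ (hα0 _), hPdeg, mul_one]
    exact sup_const univ_nonempty r
  refine ⟨hG0, free_quotient_span_singleton hspan, fun x hx hxG => ?_, hsup,
    ⟨⟨_, Submodule.mem_span_singleton_self _, hG0, le_antisymm ?_ ?_⟩, ?_⟩⟩
  · obtain ⟨v, rfl⟩ := exists_eq_smul_of_algebraMap_mem_span hspan
      (hxG ▸ Submodule.mem_span_singleton_self _)
    exact sup_natDegree_le_sup_natDegree_smul _ (by rintro rfl; exact hx (zero_smul _ _))
  · exact (polyWeight_le _).trans_eq (by rw [hsup])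
  · simpa using mul_succ_le_polyWeight_smul_comp hrn hPdeg.le hP hα hα0 one_ne_zero
  · rintro w ⟨x, hx, hx0, rfl⟩
    obtain ⟨v, rfl⟩ := exists_eq_smul_of_algebraMap_mem_span hspan hx
    exact mul_succ_le_polyWeight_smul_comp hrn hPdeg.le hP hα hα0
      (by rintro rfl; exact hx0 (zero_smul _ _))

theorem CGC_s_eq_zero_MDS
    {F : Type*} [Field F] [Fintype F] [DecidableEq F]
    (n r : ℕ) (hrn : r < n)
    -- a ∈ F_q^× has multiplicative order at least n
    (a : F) (ha : a ≠ 0) (horder : n ≤ orderOf a)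
    (b : F)
    -- c_j = Σ_{m=j}^{r} C(m,j) b^{m−j} ≠ 0 for all 0 ≤ j ≤ r
    (hc : ∀ j ≤ r, (∑ m ∈ Finset.Icc j r, (m.choose j : F) * b ^ (m - j)) ≠ 0)
    -- G(z) = ( Σ_{i=0}^{r} (z+b)^i , Σ_{i=0}^{r} (az+b)^i , … , Σ_{i=0}^{r} (a^{n−1}z+b)^i )
    (Gpoly : Fin n → Polynomial F)
    (hG : ∀ k : Fin n, Gpoly k =
      ∑ i ∈ Finset.range (r + 1),
        (Polynomial.C (a ^ (k : ℕ)) * Polynomial.X + Polynomial.C b) ^ i) :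
    -- G(z) is a generator matrix (rank 1) of C = F_q(z)·G(z) …
    Gpoly ≠ 0 ∧
    -- … which is basic: F_q[z]^n / (F_q[z]-row span of G) is free
    Module.Free (Polynomial F)
      ((Fin n → Polynomial F) ⧸ Submodule.span (Polynomial F) {Gpoly}) ∧
    -- … and canonical: its row degree is minimal among all polynomial generator matrices of C
    (∀ x : Fin n → Polynomial F, x ≠ 0 →
        Submodule.span (RatFunc F) {liftVec x} = Submodule.span (RatFunc F) {liftVec Gpoly} →
        (Finset.univ.sup fun i => (Gpoly i).natDegree) ≤
          Finset.univ.sup fun i => (x i).natDegree) ∧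
    -- C has degree r (the max degree of the 1×1 minors of the basic matrix G)
    (Finset.univ.sup fun i => (Gpoly i).natDegree) = r ∧
    -- the free distance of C equals n(r+1), the generalized Singleton bound for (n,1,r):
    -- hence C is an MDS convolutional code
    IsLeast { w : ℕ | ∃ x : Fin n → Polynomial F,
        liftVec x ∈ Submodule.span (RatFunc F) {liftVec Gpoly} ∧ x ≠ 0 ∧ polyWeight x = w }
      (n * (r + 1)) :=
  CGC_s_eq_zero_MDS_general n r hrn a ha horder b hc Gpoly hG
end

section
/- Let F_q be a finite field and let C ⊆ F_q(z)^n be a convolutional code of dimension k and degree δ. Then there exists a basic generator matrix G of C such that deg G = δ, where deg G denotes the sum of the row degrees of G (the degree of a row being the maximum of the degrees of its entries); moreover, this G satisfies deg G ≤ deg G' for every polynomial generator matrix G' of C. -/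
open Polynomial Finset

/-- `δ_G`: the maximum of the degrees of the k×k minors of a k×n polynomial matrix G. -/
noncomputable def maxMinorDeg {F : Type*} [Field F] {k n : ℕ}
    (G : Fin k → Fin n → Polynomial F) : ℕ :=
  Finset.univ.sup fun g : Fin k → Fin n => (((Matrix.of G).submatrix id g).det).natDegree

/-- `deg G`: the sum of the row degrees of a polynomial matrix, the degree of a row
being the maximum of the degrees of its entries. -/
noncomputable def rowDegSum {F : Type*} [Field F] {k n : ℕ}
    (G : Fin k → Fin n → Polynomial F) : ℕ :=
  ∑ i, Finset.univ.sup fun j => (G i j).natDegree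

/-! A basic generator matrix can be row reduced by unimodular row operations: while its
highest-row-degree coefficient matrix `[G]ₕᵣ` has dependent rows, shifting the rows of a relation
by powers of `z` and adding them into a row of largest degree lowers that row degree. Unimodular
operations keep the `F[z]`-row span, hence the code and basicness, and change the maximal minors
only by a unit. Once `[G]ₕᵣ` has full rank, the coefficient of `z ^ deg G` in some maximal minor
is a nonzero minor of `[G]ₕᵣ`, so `deg G = δ`.

For minimality, the rows of any generator matrix `G'` lie in the `F[z]`-span of the rows of `G₀`,
since `F[z]ⁿ / ⟨G₀⟩` is torsion free. So `G' = T G₀` with `det T ≠ 0`, and then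
`δ ≤ maxMinorDeg G' ≤ deg G'`. -/

namespace Polynomial

variable {R : Type*}

theorem coeff_prod_sum_of_natDegree_le [CommSemiring R] {ι : Type*} (s : Finset ι)
    (f : ι → R[X]) (d : ι → ℕ) (h : ∀ i ∈ s, (f i).natDegree ≤ d i) :
    (∏ i ∈ s, f i).coeff (∑ i ∈ s, d i) = ∏ i ∈ s, (f i).coeff (d i) := by
  classical
  induction s using Finset.induction_on with
  | empty => simp
  | insert a s ha ih =>
    have hs : ∀ i ∈ s, (f i).natDegree ≤ d i := fun i hi => h i (mem_insert_of_mem hi)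
    rw [prod_insert ha, sum_insert ha, prod_insert ha,
      coeff_mul_add_eq_of_natDegree_le (h a (mem_insert_self a s))
        ((natDegree_prod_le s f).trans (sum_le_sum hs)), ih hs]

variable [Semiring R]

theorem natDegree_C_mul_X_pow_sub_mul_le {p : R[X]} {d e : ℕ} (hp : p.natDegree ≤ d)
    (hde : d ≤ e) (a : R) : (C a * X ^ (e - d) * p).natDegree ≤ e :=
  natDegree_mul_le.trans (by have := natDegree_C_mul_X_pow_le a (e - d); omega)

theorem coeff_C_mul_X_pow_sub_mul {p : R[X]} {d e : ℕ} (hp : p.natDegree ≤ d)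
    (hde : d ≤ e) (a : R) : (C a * X ^ (e - d) * p).coeff e = a * p.coeff d := by
  have := coeff_mul_add_eq_of_natDegree_le (natDegree_C_mul_X_pow_le a (e - d)) hp
  rwa [Nat.sub_add_cancel hde, coeff_C_mul_X_pow, if_pos rfl] at this

theorem natDegree_lt_of_coeff_eq_zero {p : R[X]} {d : ℕ} (hp : p ≠ 0) (hle : p.natDegree ≤ d)
    (hd : p.coeff d = 0) : p.natDegree < d :=
  hle.lt_of_ne fun h => leadingCoeff_ne_zero.mpr hp (by rwa [leadingCoeff, h])

end Polynomial

namespace Matrix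

variable {R n : Type*} [CommRing R] [Fintype n] [DecidableEq n]

theorem natDegree_det_le_sum {M : Matrix n n R[X]} {d : n → ℕ}
    (h : ∀ i j, (M i j).natDegree ≤ d i) : M.det.natDegree ≤ ∑ i, d i := by
  rw [det_apply]
  refine natDegree_sum_le_of_forall_le _ _ fun σ _ => ?_
  rw [Units.smul_def, zsmul_eq_mul]
  refine natDegree_mul_le.trans ?_
  rw [natDegree_intCast, zero_add, ← Equiv.sum_comp σ d]
  exact (natDegree_prod_le _ _).trans (sum_le_sum fun i _ => h (σ i) i)

theorem coeff_det_sum_eq_det {M : Matrix n n R[X]} {d : n → ℕ}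
    (h : ∀ i j, (M i j).natDegree ≤ d i) :
    M.det.coeff (∑ i, d i) = (of fun i j => (M i j).coeff (d i)).det := by
  rw [det_apply, det_apply, finsetSum_coeff]
  refine sum_congr rfl fun σ _ => ?_
  rw [Units.smul_def, Units.smul_def, zsmul_eq_mul, coeff_intCast_mul, ← zsmul_eq_mul,
    ← Equiv.sum_comp σ d, coeff_prod_sum_of_natDegree_le _ _ _ fun i _ => h (σ i) i]
  rfl

theorem det_one_updateRow (i : n) (w : n → R) : ((1 : Matrix n n R).updateRow i w).det = w i := by
  conv_lhs => rw [← vecMul_one w, vecMul_eq_sum]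
  rw [det_updateRow_sum, det_one, smul_eq_mul, mul_one]

end Matrix

section RowDegree

variable {R ι : Type*} [Semiring R] [Fintype ι]

noncomputable def rowDeg (v : ι → R[X]) : ℕ :=
  univ.sup fun j => (v j).natDegree

theorem natDegree_le_rowDeg (v : ι → R[X]) (j : ι) : (v j).natDegree ≤ rowDeg v :=
  le_sup (f := fun j => (v j).natDegree) (mem_univ j)

theorem rowDeg_lt_of_coeff_eq_zero {v : ι → R[X]} {d : ℕ} (hv : v ≠ 0)
    (hle : ∀ j, (v j).natDegree ≤ d) (hd : ∀ j, (v j).coeff d = 0) : rowDeg v < d := by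
  obtain ⟨j₀, hj₀⟩ := Function.ne_iff.mp hv
  have hd_pos : 0 < d := Nat.zero_lt_of_lt (natDegree_lt_of_coeff_eq_zero hj₀ (hle j₀) (hd j₀))
  refine (Finset.sup_lt_iff hd_pos).mpr fun j _ => ?_
  by_cases hj : v j = 0
  · rwa [hj, natDegree_zero]
  · exact natDegree_lt_of_coeff_eq_zero hj (hle j) (hd j)

/-- The highest-row-degree coefficient matrix `[G]ₕᵣ`. -/
noncomputable def leadingRowCoeff {m : Type*} (G : Matrix m ι R[X]) : Matrix m ι R :=
  Matrix.of fun i j => (G i j).coeff (rowDeg (G i))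

end RowDegree

namespace Matrix

variable {R m n : Type*} [CommRing R] [Fintype m]

theorem span_row_mul_le (T : Matrix m m R) (G : Matrix m n R) :
    Submodule.span R (Set.range (T * G).row) ≤ Submodule.span R (Set.range G.row) := by
  rw [Submodule.span_le, ← range_vecMulLinear]
  rintro _ ⟨i, rfl⟩
  exact ⟨T i, rfl⟩

theorem span_row_mul_of_isUnit_det [DecidableEq m] {U : Matrix m m R} (hU : IsUnit U.det)
    (G : Matrix m n R) :
    Submodule.span R (Set.range (U * G).row) = Submodule.span R (Set.range G.row) := by
  refine (span_row_mul_le U G).antisymm ?_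
  simpa only [nonsing_inv_mul_cancel_left U G hU] using span_row_mul_le U⁻¹ (U * G)

theorem exists_eq_mul_of_span_row_le {A B : Matrix m n R}
    (h : Submodule.span R (Set.range A.row) ≤ Submodule.span R (Set.range B.row)) :
    ∃ T : Matrix m m R, A = T * B := by
  rw [← range_vecMulLinear B] at h
  choose T hT using fun i => h (Submodule.subset_span ⟨i, rfl⟩)
  exact ⟨T, funext fun i => (hT i).symm⟩

variable [DecidableEq m] [IsDomain R]

theorem linearIndependent_row_mul {T : Matrix m m R} (hT : T.det ≠ 0) {G : Matrix m n R}
    (hG : LinearIndependent R G.row) : LinearIndependent R (T * G).row := by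
  rw [← vecMul_injective_iff] at hG ⊢
  have hT' : Function.Injective T.vecMul := by
    rwa [vecMul_injective_iff, linearIndependent_row_iff, nonsingular_iff_det_ne_zero]
  simpa only [Function.comp_def, vecMul_vecMul] using hG.comp hT'

theorem det_ne_zero_of_linearIndependent_row_mul {T : Matrix m m R} {G : Matrix m n R}
    (h : LinearIndependent R (T * G).row) : T.det ≠ 0 := by
  rw [← vecMul_injective_iff] at h
  rw [← nonsingular_iff_det_ne_zero, ← linearIndependent_row_iff, ← vecMul_injective_iff]
  refine Function.Injective.of_comp (f := G.vecMul) ?_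
  simpa only [Function.comp_def, vecMul_vecMul] using h

end Matrix

theorem Matrix.exists_det_submatrix_ne_zero {K : Type*} [Field K] {k n : ℕ}
    {M : Matrix (Fin k) (Fin n) K} (hM : LinearIndependent K M.row) :
    ∃ g : Fin k → Fin n, (M.submatrix id g).det ≠ 0 := by
  have hcols := Submodule.exists_fun_fin_finrank_span_eq K (Set.range M.col)
  rw [← rank_eq_finrank_span_cols, hM.rank_matrix, Fintype.card_fin] at hcols
  obtain ⟨f, hf, -, hf_li⟩ := hcols
  choose g hg using hf
  refine ⟨g, ?_⟩
  rw [← nonsingular_iff_det_ne_zero, ← linearIndependent_col_iff]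
  have hcol : (M.submatrix id g).col = f := funext hg
  rwa [hcol]

section Degree

open Matrix

variable {F : Type*} [Field F] {k n : ℕ}

theorem maxMinorDeg_le_rowDegSum (G : Fin k → Fin n → F[X]) : maxMinorDeg G ≤ rowDegSum G :=
  Finset.sup_le fun g _ => natDegree_det_le_sum fun i j => natDegree_le_rowDeg (G i) (g j)

theorem rowDegSum_le_maxMinorDeg {G : Matrix (Fin k) (Fin n) F[X]}
    (hG : LinearIndependent F (leadingRowCoeff G).row) : rowDegSum G ≤ maxMinorDeg G := by
  obtain ⟨g, hg⟩ := exists_det_submatrix_ne_zero hG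
  have hcoeff : ((of G).submatrix id g).det.coeff (rowDegSum G)
      = ((leadingRowCoeff G).submatrix id g).det :=
    coeff_det_sum_eq_det fun i j => natDegree_le_rowDeg (G i) (g j)
  calc rowDegSum G ≤ ((of G).submatrix id g).det.natDegree := le_natDegree_of_ne_zero (hcoeff ▸ hg)
    _ ≤ maxMinorDeg G := le_sup (f := fun g => ((of G).submatrix id g).det.natDegree) (mem_univ g)

theorem rowDegSum_updateRow_lt {G : Matrix (Fin k) (Fin n) F[X]} {i : Fin k}
    {r : Fin n → F[X]} (h : rowDeg r < rowDeg (G i)) :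
    rowDegSum (G.updateRow i r) < rowDegSum G := by
  refine sum_lt_sum (fun l _ => ?_) ⟨i, mem_univ i, ?_⟩
  · show rowDeg (G.updateRow i r l) ≤ rowDeg (G l)
    rcases eq_or_ne l i with rfl | hl
    · rw [updateRow_self]; exact h.le
    · rw [updateRow_ne hl]
  · show rowDeg (G.updateRow i r i) < rowDeg (G i)
    rwa [updateRow_self]

theorem maxMinorDeg_le_maxMinorDeg_mul {T : Matrix (Fin k) (Fin k) F[X]} (hT : T.det ≠ 0)
    (G : Matrix (Fin k) (Fin n) F[X]) : maxMinorDeg G ≤ maxMinorDeg (T * G) := by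
  refine Finset.sup_mono_fun fun g _ => ?_
  have hminor : (of (T * G)).submatrix id g = T * (of G).submatrix id g := rfl
  rw [hminor, det_mul]
  by_cases hg : ((of G).submatrix id g).det = 0
  · rw [hg, natDegree_zero]; exact Nat.zero_le _
  · rw [natDegree_mul hT hg]; exact Nat.le_add_left _ _

theorem maxMinorDeg_mul_of_isUnit_det {U : Matrix (Fin k) (Fin k) F[X]} (hU : IsUnit U.det)
    (G : Matrix (Fin k) (Fin n) F[X]) : maxMinorDeg (U * G) = maxMinorDeg G := by
  refine le_antisymm ?_ (maxMinorDeg_le_maxMinorDeg_mul hU.ne_zero G)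
  simpa only [nonsing_inv_mul_cancel_left U G hU] using
    maxMinorDeg_le_maxMinorDeg_mul (isUnit_nonsing_inv_det U hU).ne_zero (U * G)

theorem exists_isUnit_det_rowDegSum_mul_lt {G : Matrix (Fin k) (Fin n) F[X]}
    (hG : LinearIndependent F[X] G.row) (hlead : ¬LinearIndependent F (leadingRowCoeff G).row) :
    ∃ U : Matrix (Fin k) (Fin k) F[X], IsUnit U.det ∧ rowDegSum (U * G) < rowDegSum G := by
  classical
  obtain ⟨c, hc, i₀, hi₀⟩ := Fintype.not_linearIndependent_iff.mp hlead
  obtain ⟨i, hi, hmax⟩ := (univ.filter fun l => c l ≠ 0).exists_max_image (fun l => rowDeg (G l))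
    ⟨i₀, by simpa using hi₀⟩
  simp only [mem_filter, mem_univ, true_and] at hi hmax
  -- Shifting row `l` by `z ^ (dᵢ - dₗ)` aligns the leading coefficients in degree `dᵢ`,
  -- where the relation `c` among them cancels.
  set w : Fin k → F[X] := fun l => C (c l) * X ^ (rowDeg (G i) - rowDeg (G l))
  set U := (1 : Matrix (Fin k) (Fin k) F[X]).updateRow i w
  have hU : IsUnit U.det := by
    rw [det_one_updateRow]
    simpa [w] using hi
  have hUG : U * G = G.updateRow i (w ᵥ* G) := by rw [updateRow_mul, Matrix.one_mul]
  refine ⟨U, hU, hUG ▸ rowDegSum_updateRow_lt ?_⟩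
  have hr : w ᵥ* G ≠ 0 := by
    simpa [hUG, Matrix.row] using (linearIndependent_row_mul hU.ne_zero hG).ne_zero i
  have hterm : ∀ l j, (w l * G l j).natDegree ≤ rowDeg (G i) ∧
      (w l * G l j).coeff (rowDeg (G i)) = c l * leadingRowCoeff G l j := by
    intro l j
    by_cases hl : c l = 0
    · simp [w, hl]
    · exact ⟨natDegree_C_mul_X_pow_sub_mul_le (natDegree_le_rowDeg _ _) (hmax l hl) _,
        coeff_C_mul_X_pow_sub_mul (natDegree_le_rowDeg _ _) (hmax l hl) _⟩
  refine rowDeg_lt_of_coeff_eq_zero hr (fun j => ?_) (fun j => ?_)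
  · exact natDegree_sum_le_of_forall_le univ (fun l => w l * G l j) fun l _ => (hterm l j).1
  · have hcj := congrFun hc j
    simp only [Finset.sum_apply, Pi.smul_apply, smul_eq_mul, Pi.zero_apply, Matrix.row] at hcj
    rw [vecMul, dotProduct, finsetSum_coeff]
    simpa only [(hterm _ j).2] using hcj

theorem exists_isUnit_det_rowDegSum_mul_eq_maxMinorDeg {G : Matrix (Fin k) (Fin n) F[X]}
    (hG : LinearIndependent F[X] G.row) :
    ∃ U : Matrix (Fin k) (Fin k) F[X], IsUnit U.det ∧ rowDegSum (U * G) = maxMinorDeg G := by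
  induction hN : rowDegSum G using Nat.strong_induction_on generalizing G with
  | _ N ih =>
  by_cases hlead : LinearIndependent F (leadingRowCoeff G).row
  · refine ⟨1, by simp, ?_⟩
    rw [Matrix.one_mul]
    exact (rowDegSum_le_maxMinorDeg hlead).antisymm (maxMinorDeg_le_rowDegSum G)
  · obtain ⟨U₁, hU₁, hlt⟩ := exists_isUnit_det_rowDegSum_mul_lt hG hlead
    obtain ⟨U₂, hU₂, hred⟩ := ih _ (hN ▸ hlt) (linearIndependent_row_mul hU₁.ne_zero hG) rfl
    refine ⟨U₂ * U₁, by rw [det_mul]; exact hU₂.mul hU₁, ?_⟩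
    rw [Matrix.mul_assoc, hred, maxMinorDeg_mul_of_isUnit_det hU₁]

theorem maxMinorDeg_le_rowDegSum_of_span_row_le {G G' : Matrix (Fin k) (Fin n) F[X]}
    (hG' : LinearIndependent F[X] G'.row)
    (h : Submodule.span F[X] (Set.range G'.row) ≤ Submodule.span F[X] (Set.range G.row)) :
    maxMinorDeg G ≤ rowDegSum G' := by
  obtain ⟨T, rfl⟩ := exists_eq_mul_of_span_row_le h
  exact (maxMinorDeg_le_maxMinorDeg_mul (det_ne_zero_of_linearIndependent_row_mul hG') G).trans
    (maxMinorDeg_le_rowDegSum _)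

end Degree

theorem Submodule.mem_of_smul_mem_of_isTorsionFree_quotient {R V : Type*} [CommRing R]
    [IsDomain R] [AddCommGroup V] [Module R V] {M : Submodule R V}
    [Module.IsTorsionFree R (V ⧸ M)] {b : R} (hb : b ≠ 0) {x : V} (h : b • x ∈ M) : x ∈ M := by
  rw [← Quotient.mk_eq_zero, Quotient.mk_smul] at h
  rw [← Quotient.mk_eq_zero]
  exact (smul_eq_zero_iff_right hb).mp h

section Lift

open Submodule

variable {F : Type*} [Field F] {k n : ℕ}

variable (F n) in
noncomputable def liftVecLinearMap : (Fin n → F[X]) →ₗ[F[X]] (Fin n → RatFunc F) :=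
  (Algebra.linearMap F[X] (RatFunc F)).compLeft (Fin n)

theorem liftVecLinearMap_apply (x : Fin n → F[X]) : liftVecLinearMap F n x = liftVec x :=
  rfl

theorem liftVecLinearMap_injective : Function.Injective (liftVecLinearMap F n) :=
  fun _ _ h => funext fun j => IsFractionRing.injective F[X] (RatFunc F) (congrFun h j)

theorem span_liftVec_eq_span_image_span (A : Fin k → Fin n → F[X]) :
    span (RatFunc F) (Set.range fun i => liftVec (A i))
      = span (RatFunc F) (liftVecLinearMap F n '' span F[X] (Set.range A)) := by
  rw [← map_coe, map_span, span_span_of_tower, ← Set.range_comp]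
  rfl

theorem span_liftVec_eq_of_span_eq {A B : Fin k → Fin n → F[X]}
    (h : span F[X] (Set.range A) = span F[X] (Set.range B)) :
    span (RatFunc F) (Set.range fun i => liftVec (A i))
      = span (RatFunc F) (Set.range fun i => liftVec (B i)) := by
  rw [span_liftVec_eq_span_image_span, span_liftVec_eq_span_image_span, h]

theorem exists_smul_mem_span_of_liftVec_mem_span {B : Fin k → Fin n → F[X]} {x : Fin n → F[X]}
    (hx : liftVec x ∈ span (RatFunc F) (Set.range fun i => liftVec (B i))) :
    ∃ b : F[X], b ≠ 0 ∧ b • x ∈ span F[X] (Set.range B) := by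
  obtain ⟨c, hc⟩ := (mem_span_range_iff_exists_fun _).mp hx
  obtain ⟨b, hb⟩ := IsLocalization.exist_integer_multiples_of_finite (nonZeroDivisors F[X]) c
  choose p hp using hb
  refine ⟨b, nonZeroDivisors.coe_ne_zero b, ?_⟩
  have hbx : (b : F[X]) • x = ∑ i, p i • B i := liftVecLinearMap_injective <| by
    simp only [map_smul, map_sum, liftVecLinearMap_apply, ← hc, smul_sum]
    exact sum_congr rfl fun i _ => by rw [← smul_assoc, ← hp, algebraMap_smul]
  rw [hbx]
  exact sum_mem fun i _ => smul_mem _ _ (subset_span ⟨i, rfl⟩)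

theorem span_le_of_span_liftVec_le {A B : Fin k → Fin n → F[X]}
    [Module.IsTorsionFree F[X] ((Fin n → F[X]) ⧸ span F[X] (Set.range B))]
    (h : span (RatFunc F) (Set.range fun i => liftVec (A i))
      ≤ span (RatFunc F) (Set.range fun i => liftVec (B i))) :
    span F[X] (Set.range A) ≤ span F[X] (Set.range B) := by
  rw [span_le]
  rintro _ ⟨i, rfl⟩
  obtain ⟨b, hb, hbA⟩ := exists_smul_mem_span_of_liftVec_mem_span (h (subset_span ⟨i, rfl⟩))
  exact mem_of_smul_mem_of_isTorsionFree_quotient hb hbA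

end Lift

theorem exists_canonical_generator_matrix_general
    {F : Type*} [Field F]
    (n k δ : ℕ)
    (C : Submodule (RatFunc F) (Fin n → RatFunc F))
    -- C has degree δ: δ is the maximum minor degree of some (hence any) basic
    -- generator matrix G₀ of C
    (G₀ : Fin k → Fin n → Polynomial F)
    (hG₀rank : LinearIndependent (Polynomial F) G₀)
    (hG₀span : Submodule.span (RatFunc F) (Set.range fun i => liftVec (G₀ i)) = C)
    (hG₀basic : Module.Free (Polynomial F)
      ((Fin n → Polynomial F) ⧸ Submodule.span (Polynomial F) (Set.range G₀)))
    (hδ : maxMinorDeg G₀ = δ) :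
    -- there is a basic generator matrix G of C with deg G = δ,
    -- minimal among all polynomial generator matrices of C
    ∃ G : Fin k → Fin n → Polynomial F,
      LinearIndependent (Polynomial F) G ∧
      Submodule.span (RatFunc F) (Set.range fun i => liftVec (G i)) = C ∧
      Module.Free (Polynomial F)
        ((Fin n → Polynomial F) ⧸ Submodule.span (Polynomial F) (Set.range G)) ∧
      rowDegSum G = δ ∧
      ∀ G' : Fin k → Fin n → Polynomial F,
        LinearIndependent (Polynomial F) G' →
        Submodule.span (RatFunc F) (Set.range fun i => liftVec (G' i)) = C →
        rowDegSum G ≤ rowDegSum G' := by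
  obtain ⟨U, hU, hred⟩ :=
    exists_isUnit_det_rowDegSum_mul_eq_maxMinorDeg (G := Matrix.of G₀) hG₀rank
  set G := U * Matrix.of G₀
  have hspan : Submodule.span F[X] (Set.range G) = Submodule.span F[X] (Set.range G₀) :=
    Matrix.span_row_mul_of_isUnit_det hU (Matrix.of G₀)
  have hliftspan := (span_liftVec_eq_of_span_eq hspan).trans hG₀span
  have hbasic : Module.Free F[X] ((Fin n → F[X]) ⧸ Submodule.span F[X] (Set.range G)) :=
    hspan ▸ hG₀basic
  refine ⟨G, Matrix.linearIndependent_row_mul hU.ne_zero hG₀rank, hliftspan, hbasic,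
    hred.trans hδ, fun G' hG' hG'span => ?_⟩
  have hG'_le : Submodule.span F[X] (Set.range G') ≤ Submodule.span F[X] (Set.range G₀) :=
    span_le_of_span_liftVec_le (hG'span.trans hG₀span.symm).le
  exact hred.trans_le
    (maxMinorDeg_le_rowDegSum_of_span_row_le (G := Matrix.of G₀) (G' := Matrix.of G') hG' hG'_le)

theorem exists_canonical_generator_matrix
    {F : Type*} [Field F] [Fintype F]
    (n k δ : ℕ)
    (C : Submodule (RatFunc F) (Fin n → RatFunc F))
    (hC : Module.finrank (RatFunc F) C = k)
    -- C has degree δ: δ is the maximum minor degree of some (hence any) basic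
    -- generator matrix G₀ of C
    (G₀ : Fin k → Fin n → Polynomial F)
    (hG₀rank : LinearIndependent (Polynomial F) G₀)
    (hG₀span : Submodule.span (RatFunc F) (Set.range fun i => liftVec (G₀ i)) = C)
    (hG₀basic : Module.Free (Polynomial F)
      ((Fin n → Polynomial F) ⧸ Submodule.span (Polynomial F) (Set.range G₀)))
    (hδ : maxMinorDeg G₀ = δ) :
    -- there is a basic generator matrix G of C with deg G = δ,
    -- minimal among all polynomial generator matrices of C
    ∃ G : Fin k → Fin n → Polynomial F,
      LinearIndependent (Polynomial F) G ∧
      Submodule.span (RatFunc F) (Set.range fun i => liftVec (G i)) = C ∧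
      Module.Free (Polynomial F)
        ((Fin n → Polynomial F) ⧸ Submodule.span (Polynomial F) (Set.range G)) ∧
      rowDegSum G = δ ∧
      ∀ G' : Fin k → Fin n → Polynomial F,
        LinearIndependent (Polynomial F) G' →
        Submodule.span (RatFunc F) (Set.range fun i => liftVec (G' i)) = C →
        rowDegSum G ≤ rowDegSum G' :=
  exists_canonical_generator_matrix_general n k δ C G₀ hG₀rank hG₀span hG₀basic hδ
end
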